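/- Let S be sufficient for Θ, E any nonnegative random variable, and G := E_Θ[E | S]. Then, adopting the conventions 0/0 = 0 and ∞/∞ = 1, for every θ ∈ Θ one has E_θ[E/G | S] ≤ 1 P_θ-almost surely; consequently E_θ[E/G] ≤ 1 and E_θ[log(E/G)] ≤ 0. -/

import Mathlib

open MeasureTheory ENNReal Filter Set
open scoped Classical
noncomputable section

/-- The positive part of an extended real, as an extended nonnegative real. -/
def erealPos (a : EReal) : ℝ≥0∞ := if a = ⊤ then ⊤ else ENNReal.ofReal a.toReal

/-- Generalized expectation `E[f] = E[f⁺] - E[f⁻]`, valued in the extended reals. -/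
def eexp {Ω : Type*} {mΩ : MeasurableSpace Ω} (μ : Measure Ω) (f : Ω → EReal) : EReal :=
  ((∫⁻ ω, erealPos (f ω) ∂μ : ℝ≥0∞) : EReal) - ((∫⁻ ω, erealPos (-(f ω)) ∂μ : ℝ≥0∞) : EReal)

/-- The expectation of an extended-real random variable is (well-)defined when at least one of
the expectations of its positive and negative parts is finite. -/
def ExpDefined {Ω : Type*} {mΩ : MeasurableSpace Ω} (μ : Measure Ω) (f : Ω → EReal) : Prop :=
  (∫⁻ ω, erealPos (f ω) ∂μ) < ⊤ ∨ (∫⁻ ω, erealPos (-(f ω)) ∂μ) < ⊤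

/-- Logarithm on `[0,∞]`, with `log 0 = -∞` and `log ∞ = ∞`. -/
def elog (x : ℝ≥0∞) : EReal := if x = 0 then ⊥ else if x = ⊤ then ⊤ else ((Real.log x.toReal : ℝ) : EReal)

/-- Ratio on `[0,∞]` with the conventions `0/0 = 0` and `∞/∞ = 1`. -/
def eratio (a b : ℝ≥0∞) : ℝ≥0∞ := if a = ⊤ ∧ b = ⊤ then 1 else a / b

/-- `g` is a version of the conditional expectation of the nonnegative `h` given the
sub-σ-field `m`, under the measure `μ`. -/
def IsCondExpNN {Ω : Type*} {mΩ : MeasurableSpace Ω} (m : MeasurableSpace Ω)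
    (μ : @Measure Ω mΩ) (h g : Ω → ℝ≥0∞) : Prop :=
  Measurable[m] g ∧ ∀ A : Set Ω, MeasurableSet[m] A → ∫⁻ ω in A, g ω ∂μ = ∫⁻ ω in A, h ω ∂μ

/-- `g` is a universal (θ-free) version of the conditional expectation of `h` given `m`,
simultaneously under all measures `P θ`, `θ` ranging over a set `T` of parameters. -/
def IsUnivCondExpNN {Ω Θ : Type*} {mΩ : MeasurableSpace Ω} (m : MeasurableSpace Ω)
    (P : Θ → @Measure Ω mΩ) (T : Set Θ) (h g : Ω → ℝ≥0∞) : Prop :=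
  Measurable[m] g ∧ ∀ θ ∈ T, IsCondExpNN m (P θ) h g

/-- A sub-σ-field `m` is sufficient for the family `P` over the parameter set `T`:
every nonnegative measurable function admits a universal conditional expectation given `m`. -/
def IsSufficient {Ω Θ : Type*} {mΩ : MeasurableSpace Ω} (m : MeasurableSpace Ω)
    (P : Θ → @Measure Ω mΩ) (T : Set Θ) : Prop :=
  m ≤ mΩ ∧ ∀ h : Ω → ℝ≥0∞, Measurable[mΩ] h → ∃ g, IsUnivCondExpNN m P T h g

/-- Kullback–Leibler divergence, valued in `[0,∞]` (as an extended real):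
`∫ log(dμ/dν) dμ` when `μ ≪ ν`, and `+∞` otherwise. -/
def klDiv' {Ω : Type*} {mΩ : MeasurableSpace Ω} (μ ν : Measure Ω) : EReal :=
  if μ ≪ ν then eexp μ (fun ω => elog (μ.rnDeriv ν ω)) else ⊤

/-- `F : [0,∞] → [-∞,∞]` is the extension by limits of a concave utility `f : (0,∞) → ℝ`,
i.e. `F 0 = lim_{x↓0} f x`, `F ∞ = lim_{x→∞} f x`, and `F = f` in between. -/
def IsConcaveExtension (f : ℝ → ℝ) (F : ℝ≥0∞ → EReal) : Prop :=
  ConcaveOn ℝ (Set.Ioi 0) f ∧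
  (∀ x : ℝ≥0∞, x ≠ 0 → x ≠ ⊤ → F x = ((f x.toReal : ℝ) : EReal)) ∧
  Tendsto (fun x : ℝ => ((f x : ℝ) : EReal)) (nhdsWithin 0 (Set.Ioi 0)) (nhds (F 0)) ∧
  Tendsto (fun x : ℝ => ((f x : ℝ) : EReal)) atTop (nhds (F ⊤))

/-!
Where `0 < G < ∞`, the ratio is `G⁻¹ * E` with `G⁻¹` measurable for `S`, so on every set of
`σ(S)` it integrates like `G⁻¹ * G = 1`; where `G = ∞` the convention `∞/∞ = 1` keeps the ratio
at most `1`; and `E = 0` almost surely where `G = 0`. Hence `∫_A E/G dP_θ ≤ P_θ(A)` for every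
`A ∈ σ(S)`, which is the conditional bound, and `A = Ω` gives `E_θ[E/G] ≤ 1`. The last claim then
follows from `log x ≤ x - 1`.
-/

lemma measurable_eratio : Measurable fun p : ℝ≥0∞ × ℝ≥0∞ => eratio p.1 p.2 :=
  Measurable.ite ((measurable_fst (measurableSet_singleton ⊤)).inter
    (measurable_snd (measurableSet_singleton ⊤))) measurable_const
    (measurable_fst.div measurable_snd)

lemma eratio_le_ite_add_inv_mul {a b : ℝ≥0∞} (h : b = 0 → a = 0) :
    eratio a b ≤ (if b = ⊤ then 1 else 0) + b⁻¹ * a := by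
  rcases eq_or_ne b ⊤ with rfl | hb
  · by_cases ha : a = ⊤ <;> simp [eratio, ha]
  rcases eq_or_ne b 0 with rfl | hb0
  · simp [eratio, h rfl]
  simp [eratio, hb, ENNReal.div_eq_inv_mul]

lemma ite_add_inv_mul_self_le_one (b : ℝ≥0∞) : (if b = ⊤ then 1 else 0) + b⁻¹ * b ≤ 1 := by
  rcases eq_or_ne b ⊤ with rfl | hb
  · simp
  rcases eq_or_ne b 0 with rfl | hb0
  · simp
  simp [hb, ENNReal.inv_mul_cancel hb0 hb]

-- `log x ≤ x - 1`, with both sides split into positive and negative parts.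
lemma erealPos_elog_add_one_le (x : ℝ≥0∞) :
    erealPos (elog x) + 1 ≤ x + erealPos (-elog x) := by
  rcases eq_or_ne x 0 with rfl | h0
  · simp [elog, erealPos]
  rcases eq_or_ne x ⊤ with rfl | htop
  · simp [elog, erealPos]
  obtain ⟨t, ht, rfl⟩ : ∃ t : ℝ, 0 < t ∧ x = ENNReal.ofReal t :=
    ⟨x.toReal, ENNReal.toReal_pos h0 htop, (ENNReal.ofReal_toReal htop).symm⟩
  have hlog : Real.log t ≤ t - 1 := Real.log_le_sub_one_of_pos ht
  rw [elog, if_neg h0, if_neg htop, ENNReal.toReal_ofReal ht.le, ← EReal.coe_neg]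
  simp only [erealPos, EReal.coe_ne_top, if_false, EReal.toReal_coe]
  rw [← ENNReal.ofReal_one]
  rcases le_total 0 (Real.log t) with hl | hl
  · rw [ENNReal.ofReal_of_nonpos (neg_nonpos.2 hl), add_zero, ← ENNReal.ofReal_add hl zero_le_one]
    exact ENNReal.ofReal_le_ofReal (by linarith)
  · rw [ENNReal.ofReal_of_nonpos hl, zero_add, ← ENNReal.ofReal_add ht.le (neg_nonneg.2 hl)]
    exact ENNReal.ofReal_le_ofReal (by linarith)

section CondExpNN

variable {Ω : Type*} {m mΩ : MeasurableSpace Ω} {μ : Measure Ω} {E G : Ω → ℝ≥0∞}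

lemma IsCondExpNN.restrict (h : IsCondExpNN m μ E G) (hm : m ≤ mΩ) {A : Set Ω}
    (hA : MeasurableSet[m] A) : IsCondExpNN m (μ.restrict A) E G := by
  refine ⟨h.1, fun B hB => ?_⟩
  rw [Measure.restrict_restrict (hm B hB), h.2 _ (hB.inter hA)]

lemma IsCondExpNN.lintegral_mul_eq (h : IsCondExpNN m μ E G) (hm : m ≤ mΩ)
    (hE : Measurable E) {f : Ω → ℝ≥0∞} (hf : Measurable[m] f) :
    ∫⁻ ω, f ω * E ω ∂μ = ∫⁻ ω, f ω * G ω ∂μ := by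
  have htrim : (μ.withDensity E).trim hm = (μ.withDensity G).trim hm := by
    refine @Measure.ext _ m _ _ fun s hs => ?_
    rw [trim_measurableSet_eq hm hs, trim_measurableSet_eq hm hs, withDensity_apply _ (hm s hs),
      withDensity_apply _ (hm s hs), h.2 s hs]
  have hfΩ : Measurable f := hf.mono hm le_rfl
  simp_rw [mul_comm (f _)]
  rw [← Pi.mul_def, ← Pi.mul_def, ← lintegral_withDensity_eq_lintegral_mul _ hE hfΩ,
    ← lintegral_withDensity_eq_lintegral_mul _ ((h.1).mono hm le_rfl) hfΩ,
    ← lintegral_trim hm hf, htrim, lintegral_trim hm hf]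

lemma IsCondExpNN.ae_eq_zero_of_eq_zero (h : IsCondExpNN m μ E G) (hm : m ≤ mΩ)
    (hE : Measurable E) : ∀ᵐ ω ∂μ, G ω = 0 → E ω = 0 := by
  have hB : MeasurableSet[m] {ω | G ω = 0} := h.1 (measurableSet_singleton 0)
  have hzero : ∫⁻ ω in {ω | G ω = 0}, E ω ∂μ = 0 := by
    rw [← h.2 _ hB]
    exact setLIntegral_eq_zero (hm _ hB) fun ω hω => hω
  exact (setLIntegral_eq_zero_iff (hm _ hB) hE).1 hzero

lemma IsCondExpNN.setLIntegral_eratio_le (h : IsCondExpNN m μ E G) (hm : m ≤ mΩ)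
    (hE : Measurable E) {A : Set Ω} (hA : MeasurableSet[m] A) :
    ∫⁻ ω in A, eratio (E ω) (G ω) ∂μ ≤ μ A := by
  have hGm : Measurable[m] G := h.1
  have htop : Measurable fun ω => if G ω = ⊤ then (1 : ℝ≥0∞) else 0 :=
    Measurable.ite (hm _ (hGm (measurableSet_singleton ⊤))) measurable_const measurable_const
  have hzero : ∀ᵐ ω ∂μ.restrict A, G ω = 0 → E ω = 0 :=
    ae_restrict_of_ae (h.ae_eq_zero_of_eq_zero hm hE)
  calc ∫⁻ ω in A, eratio (E ω) (G ω) ∂μ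
      ≤ ∫⁻ ω in A, ((if G ω = ⊤ then 1 else 0) + (G ω)⁻¹ * E ω) ∂μ :=
        lintegral_mono_ae (hzero.mono fun ω hω => eratio_le_ite_add_inv_mul hω)
    _ = ∫⁻ ω in A, ((if G ω = ⊤ then 1 else 0) + (G ω)⁻¹ * G ω) ∂μ := by
        rw [lintegral_add_left htop, lintegral_add_left htop,
          (h.restrict hm hA).lintegral_mul_eq hm hE (f := fun ω => (G ω)⁻¹) hGm.inv]
    _ ≤ ∫⁻ _ in A, 1 ∂μ := lintegral_mono fun ω => ite_add_inv_mul_self_le_one (G ω)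
    _ = μ A := setLIntegral_one A

lemma ae_le_of_forall_setLIntegral_le_trim (hm : m ≤ mΩ) [SigmaFinite (μ.trim hm)]
    {f g : Ω → ℝ≥0∞} (hf : Measurable[m] f) (hg : Measurable[m] g)
    (h : ∀ A, MeasurableSet[m] A → ∫⁻ ω in A, f ω ∂μ ≤ ∫⁻ ω in A, g ω ∂μ) : f ≤ᵐ[μ] g :=
  ae_of_ae_trim hm <| ae_le_of_forall_setLIntegral_le_of_sigmaFinite hf fun A hA _ => by
    rw [setLIntegral_trim hm hf hA, setLIntegral_trim hm hg hA]
    exact h A hA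

end CondExpNN

lemma eexp_elog_le_zero {Ω : Type*} {mΩ : MeasurableSpace Ω} {μ : Measure Ω}
    [IsProbabilityMeasure μ] {X : Ω → ℝ≥0∞} (hX : Measurable X) (hint : ∫⁻ ω, X ω ∂μ ≤ 1) :
    eexp μ (fun ω => elog (X ω)) ≤ 0 := by
  set Ipos := ∫⁻ ω, erealPos (elog (X ω)) ∂μ
  set Ineg := ∫⁻ ω, erealPos (-elog (X ω)) ∂μ
  have hle : Ipos + 1 ≤ 1 + Ineg :=
    calc Ipos + 1 = ∫⁻ ω, (erealPos (elog (X ω)) + 1) ∂μ := by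
          rw [lintegral_add_right _ measurable_const, lintegral_one, measure_univ]
      _ ≤ ∫⁻ ω, (X ω + erealPos (-elog (X ω))) ∂μ :=
          lintegral_mono fun ω => erealPos_elog_add_one_le (X ω)
      _ = ∫⁻ ω, X ω ∂μ + Ineg := lintegral_add_left hX _
      _ ≤ 1 + Ineg := add_le_add_left hint _
  rw [add_comm 1] at hle
  exact EReal.sub_nonpos.2 (EReal.coe_ennreal_le_coe_ennreal_iff.2
    ((ENNReal.add_le_add_iff_right ENNReal.one_ne_top).1 hle))

/-- With `S` sufficient for `Θ`, `E` any nonnegative random variable and `G = E_Θ[E | S]`,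
under the conventions `0/0 = 0` and `∞/∞ = 1`: for every `θ ∈ Θ`, any version of
`E_θ[E/G | S]` is at most `1` almost surely; consequently `E_θ[E/G] ≤ 1` and
`E_θ[log(E/G)] ≤ 0`. -/
theorem rao_blackwell_stmt4
    {Ω Θ : Type*} {mΩ : MeasurableSpace Ω} (P : Θ → Measure Ω)
    [∀ θ, IsProbabilityMeasure (P θ)]
    (m : MeasurableSpace Ω) (hsuf : IsSufficient m P Set.univ)
    (E : Ω → ℝ≥0∞) (hE : Measurable[mΩ] E)
    (G : Ω → ℝ≥0∞) (hG : IsUnivCondExpNN m P Set.univ E G) :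
    ∀ θ : Θ,
      (∀ H : Ω → ℝ≥0∞, IsCondExpNN m (P θ) (fun ω => eratio (E ω) (G ω)) H →
        ∀ᵐ ω ∂(P θ), H ω ≤ 1) ∧
      (∫⁻ ω, eratio (E ω) (G ω) ∂(P θ)) ≤ 1 ∧
      eexp (P θ) (fun ω => elog (eratio (E ω) (G ω))) ≤ 0 := by
  intro θ
  have hm : m ≤ mΩ := hsuf.1
  have hGθ : IsCondExpNN m (P θ) E G := hG.2 θ (Set.mem_univ θ)
  have hratio : Measurable[mΩ] fun ω => eratio (E ω) (G ω) :=
    measurable_eratio.comp (hE.prodMk (hG.1.mono hm le_rfl))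
  have hint : ∫⁻ ω, eratio (E ω) (G ω) ∂(P θ) ≤ 1 := by
    simpa using hGθ.setLIntegral_eratio_le hm hE MeasurableSet.univ
  refine ⟨fun H hH => ?_, hint, eexp_elog_le_zero hratio hint⟩
  refine ae_le_of_forall_setLIntegral_le_trim hm hH.1 measurable_const fun A hA => ?_
  rw [hH.2 A hA, setLIntegral_one]
  exact hGθ.setLIntegral_eratio_le hm hE hA
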